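/- For all n, m ∈ ℕ: ∫_{D_q} (U*)ⁿUᵐ = 1/[n+1]_q if n = m and 0 otherwise; explicitly, (1−q) Σ_{k=0}^∞ q^k ⟨e_k, (U*)ⁿUᵐ e_k⟩ equals (1−q)/(1−q^{n+1}) when n = m and vanishes when n ≠ m. -/

import Mathlib

open MeasureTheory InnerProductSpace

noncomputable section

/-- `H = ℓ²(ℕ, ℂ)`. -/
abbrev H : Type := lp (fun _ : ℕ => ℂ) 2

/-- The standard orthonormal basis `e n` of `ℓ²(ℕ, ℂ)`. -/
noncomputable def e (n : ℕ) : H := lp.single 2 n 1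

/-- The integral `∫_{D_q} a = (1−q) Σ_k q^k ⟨e_k, a e_k⟩`. -/
noncomputable def intDq (q : ℝ) (a : H →L[ℂ] H) : ℂ :=
  ((1 - q : ℝ) : ℂ) * ∑' k : ℕ, ((q : ℂ) ^ k) * (inner ℂ (e k) (a (e k)) : ℂ)

/-!
`U` is a weighted shift, so `⟨e_k, (U*)ⁿUᵐ e_k⟩ = ⟨Uⁿ e_k, Uᵐ e_k⟩` vanishes unless `n = m`,
and for `n = m` it equals `∏_{i<n} (1 - q^{k+i+1})`. With `f k = ∏_{i≤n} (1 - q^{k+i})` one has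
`(1 - q^{n+1}) q^k ∏_{i<n} (1 - q^{k+i+1}) = f (k+1) - f k`, so the series telescopes to
`lim f - f 0 = 1` (the `i = 0` factor of `f 0` is `1 - q⁰ = 0`).
-/

open Finset Filter Topology

section QSeries

variable {q : ℝ}

theorem one_sub_pow_mul_pow_mul_prod_eq_sub (n k : ℕ) :
    (1 - q ^ (n + 1)) * (q ^ k * ∏ i ∈ range n, (1 - q ^ (k + i + 1))) =
      ∏ i ∈ range (n + 1), (1 - q ^ (k + 1 + i)) - ∏ i ∈ range (n + 1), (1 - q ^ (k + i)) := by
  rw [prod_range_succ, prod_range_succ']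
  simp only [add_right_comm k 1, add_assoc k _ 1, add_zero, pow_add]
  ring

theorem tendsto_prod_one_sub_pow_add (hq0 : 0 ≤ q) (hq1 : q < 1) (n : ℕ) :
    Tendsto (fun k : ℕ => ∏ i ∈ range n, (1 - q ^ (k + i))) atTop (𝓝 1) := by
  have hlim : ∀ i ∈ range n, Tendsto (fun k : ℕ => 1 - q ^ (k + i)) atTop (𝓝 1) := fun i _ => by
    simpa using ((tendsto_pow_atTop_nhds_zero_of_lt_one hq0 hq1).comp
      (tendsto_add_atTop_nat i)).const_sub 1
  simpa using tendsto_finsetProd (range n) hlim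

theorem hasSum_pow_mul_prod_one_sub_pow (hq0 : 0 ≤ q) (hq1 : q < 1) (n : ℕ) :
    HasSum (fun k : ℕ => q ^ k * ∏ i ∈ range n, (1 - q ^ (k + i + 1))) (1 - q ^ (n + 1))⁻¹ := by
  have hpos : 0 < 1 - q ^ (n + 1) := sub_pos.mpr (pow_lt_one₀ hq0 hq1 n.succ_ne_zero)
  have hterm_nonneg : ∀ k : ℕ,
      0 ≤ (1 - q ^ (n + 1)) * (q ^ k * ∏ i ∈ range n, (1 - q ^ (k + i + 1))) :=
    fun k => mul_nonneg hpos.le <| mul_nonneg (pow_nonneg hq0 k) <|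
      prod_nonneg fun i _ => sub_nonneg.mpr (pow_le_one₀ hq0 hq1.le)
  set f : ℕ → ℝ := fun k => ∏ i ∈ range (n + 1), (1 - q ^ (k + i)) with hf
  have hf0 : f 0 = 0 := by simp [hf, prod_range_succ']
  have hpartial : ∀ N : ℕ, ∑ k ∈ range N,
      (1 - q ^ (n + 1)) * (q ^ k * ∏ i ∈ range n, (1 - q ^ (k + i + 1))) = f N := fun N => by
    simp only [one_sub_pow_mul_pow_mul_prod_eq_sub]
    rw [sum_range_sub f N, hf0, sub_zero]
  have htelescope : HasSum (fun k : ℕ =>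
      (1 - q ^ (n + 1)) * (q ^ k * ∏ i ∈ range n, (1 - q ^ (k + i + 1)))) 1 := by
    rw [hasSum_iff_tendsto_nat_of_nonneg hterm_nonneg]
    simpa only [hpartial] using tendsto_prod_one_sub_pow_add hq0 hq1 (n + 1)
  simpa only [← mul_assoc, inv_mul_cancel₀ hpos.ne', one_mul, mul_one] using htelescope.mul_left (1 - q ^ (n + 1))⁻¹

end QSeries

section WeightedShift

theorem ContinuousLinearMap.pow_apply_of_apply_eq_smul_succ {R M : Type*} [CommSemiring R]
    [TopologicalSpace M] [AddCommMonoid M] [Module R M] {U : M →L[R] M} {v : ℕ → M} {w : ℕ → R}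
    (hU : ∀ n, U (v n) = w n • v (n + 1)) (m k : ℕ) :
    (U ^ m) (v k) = (∏ i ∈ range m, w (k + i)) • v (k + m) := by
  induction m with
  | zero => simp
  | succ m ih =>
    rw [pow_succ', mul_apply_eq_comp, ih, map_smul, hU, smul_smul, prod_range_succ,
      mul_comm, add_assoc]

variable {𝕜 E : Type*} [RCLike 𝕜] [NormedAddCommGroup E] [InnerProductSpace 𝕜 E]

theorem inner_pow_apply_pow_apply_of_apply_eq_smul_succ {U : E →L[𝕜] E} {v : ℕ → E}
    (hv : Orthonormal 𝕜 v) {w : ℕ → ℝ} (hU : ∀ n, U (v n) = (w n : 𝕜) • v (n + 1)) (n m k : ℕ) :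
    inner 𝕜 ((U ^ n) (v k)) ((U ^ m) (v k)) =
      if n = m then ((∏ i ∈ range n, w (k + i) ^ 2 : ℝ) : 𝕜) else 0 := by
  rw [ContinuousLinearMap.pow_apply_of_apply_eq_smul_succ hU,
    ContinuousLinearMap.pow_apply_of_apply_eq_smul_succ hU, inner_smul_left, inner_smul_right,
    orthonormal_iff_ite.mp hv]
  rcases eq_or_ne n m with rfl | hnm
  · simp only [if_true, mul_one, ← RCLike.ofReal_prod, RCLike.conj_ofReal, ← RCLike.ofReal_mul,
      ← prod_mul_distrib, sq]
  · simp [hnm]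

theorem inner_adjoint_pow_mul_pow_apply [CompleteSpace E] (U : E →L[𝕜] E) (n m : ℕ) (x : E) :
    inner 𝕜 x ((ContinuousLinearMap.adjoint U ^ n * U ^ m) x) =
      inner 𝕜 ((U ^ n) x) ((U ^ m) x) := by
  rw [← ContinuousLinearMap.star_eq_adjoint, ← star_pow, ContinuousLinearMap.star_eq_adjoint,
    mul_apply_eq_comp, ContinuousLinearMap.adjoint_inner_right]

end WeightedShift

theorem orthonormal_e : Orthonormal ℂ e := by
  refine orthonormal_iff_ite.mpr fun j l => ?_
  simp [e, lp.inner_single_left, Pi.single_apply]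

theorem stmt11 (q : ℝ) (hq0 : 0 < q) (hq1 : q < 1)
    (U : H →L[ℂ] H)
    (hU : ∀ n : ℕ, U (e n) = (Real.sqrt (1 - q ^ (n + 1)) : ℂ) • e (n + 1))
    (n m : ℕ) :
    intDq q ((ContinuousLinearMap.adjoint U) ^ n * U ^ m)
      = if n = m then (((1 - q) / (1 - q ^ (n + 1)) : ℝ) : ℂ) else 0 := by
  have hsq : ∀ j : ℕ, Real.sqrt (1 - q ^ (j + 1)) ^ 2 = 1 - q ^ (j + 1) := fun j =>
    Real.sq_sqrt (sub_nonneg.mpr (pow_le_one₀ hq0.le hq1.le))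
  have hinner : ∀ k : ℕ, inner ℂ (e k) ((ContinuousLinearMap.adjoint U ^ n * U ^ m) (e k)) =
      if n = m then ((∏ i ∈ range n, (1 - q ^ (k + i + 1)) : ℝ) : ℂ) else 0 := fun k => by
    rw [inner_adjoint_pow_mul_pow_apply,
      inner_pow_apply_pow_apply_of_apply_eq_smul_succ orthonormal_e hU]
    simp only [hsq]
    -- the `RCLike` coercion `ℝ → ℂ` is `Complex.ofReal` by definition
    rfl
  unfold intDq
  simp_rw [hinner]
  split_ifs with hnm
  · subst hnm
    have hsum := (Complex.hasSum_ofReal.mpr (hasSum_pow_mul_prod_one_sub_pow hq0.le hq1 n)).tsum_eq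
    push_cast at hsum ⊢
    rw [hsum, div_eq_mul_inv]
  · simp
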